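/- There exist a constant C > 0 and an integer N₀ such that for every integer N ≥ N₀ and all real numbers α, β, γ with 0 ≤ α ≤ 1/2, 0 ≤ β ≤ 1/2, and 0 ≤ γ ≤ 1/2, one has 1/(2N) − C/N² ≤ −∂L_N/∂γ (α, β, γ) ≤ 1/N + C/N². In particular, −∂L_N/∂γ = Θ(1/N) uniformly over this regime. -/

import Mathlib

noncomputable section

/-- `s = exp(β·e^α / (e^α + 2N − 2))`. -/
def sFun (N : ℕ) (α β : ℝ) : ℝ :=
  Real.exp (β * Real.exp α / (Real.exp α + 2 * (N : ℝ) - 2))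

/-- `r = s + 2N − 1`. -/
def rFun (N : ℕ) (α β : ℝ) : ℝ := sFun N α β + 2 * (N : ℝ) - 1

/-- The loss `L_N(α, β, γ) = γ²·(s² + 2N − 1)/r² − 2γ·s/r + 1`. -/
def Lfun (N : ℕ) (α β γ : ℝ) : ℝ :=
  γ ^ 2 * ((sFun N α β) ^ 2 + (2 * (N : ℝ) - 1)) / (rFun N α β) ^ 2 -
    2 * γ * sFun N α β / rFun N α β + 1

/-- The partial derivative `∂L_N/∂α`. -/
def dLalpha (N : ℕ) (α β γ : ℝ) : ℝ := deriv (fun x => Lfun N x β γ) α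

/-- The partial derivative `∂L_N/∂β`. -/
def dLbeta (N : ℕ) (α β γ : ℝ) : ℝ := deriv (fun x => Lfun N α x γ) β

/-- The partial derivative `∂L_N/∂γ`. -/
def dLgamma (N : ℕ) (α β γ : ℝ) : ℝ := deriv (fun x => Lfun N α β x) γ

/-! With `M = 2N − 1`, the slope `−∂L_N/∂γ` lies between `(M + 1)/(s + M)²` and `2s/(s + M)`
when `0 ≤ γ ≤ 1/2` and `s ≥ 1`. Since `β ≤ 1/2` and `e^α ≤ 2`, the exponent defining `s` is at
most `1/(2N)`, so `1 ≤ s ≤ 1 + 1/N`. Hence the slope is at least `2N/(2N + 1)² ≥ 1/(2N) − 1/N²`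
and at most `s/N ≤ 1/N + 1/N²`. -/

lemma hasDerivAt_Lfun_gamma (N : ℕ) (α β γ : ℝ) :
    HasDerivAt (fun x => Lfun N α β x)
      (2 * γ * (sFun N α β ^ 2 + (2 * (N : ℝ) - 1)) / rFun N α β ^ 2 -
        2 * sFun N α β / rFun N α β) γ := by
  have hquad := ((hasDerivAt_pow 2 γ).mul_const
    (sFun N α β ^ 2 + (2 * (N : ℝ) - 1))).div_const (rFun N α β ^ 2)
  have hlin := (((hasDerivAt_id γ).const_mul (2 : ℝ)).mul_const (sFun N α β)).div_const
    (rFun N α β)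
  refine ((hquad.sub hlin).add_const 1).congr_deriv ?_
  norm_num

def lossSlope (s M γ : ℝ) : ℝ := 2 * s / (s + M) - 2 * γ * (s ^ 2 + M) / (s + M) ^ 2

lemma neg_dLgamma_eq (N : ℕ) (α β γ : ℝ) :
    -dLgamma N α β γ = lossSlope (sFun N α β) (2 * N - 1) γ := by
  rw [dLgamma, (hasDerivAt_Lfun_gamma N α β γ).deriv, rFun, lossSlope, add_sub_assoc]
  ring

lemma lossSlope_le {s M γ : ℝ} (hM : 0 ≤ M) (hγ : 0 ≤ γ) :
    lossSlope s M γ ≤ 2 * s / (s + M) :=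
  sub_le_self _ (by positivity)

lemma add_one_div_sq_le_lossSlope {s M γ : ℝ} (hs : 1 ≤ s) (hM : 0 ≤ M) (hγ : γ ≤ 1 / 2) :
    (M + 1) / (s + M) ^ 2 ≤ lossSlope s M γ := by
  have hr : 0 < s + M := by linarith
  rw [lossSlope, div_sub_div _ _ hr.ne' (by positivity),
    div_le_div_iff₀ (by positivity) (by positivity)]
  have hnum : (M + 1) * (s + M) ≤ 2 * s * (s + M) ^ 2 - (s + M) * (2 * γ * (s ^ 2 + M)) := by
    nlinarith [mul_nonneg (sub_nonneg.2 hγ) (by positivity : 0 ≤ s ^ 2 + M),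
      mul_nonneg (sub_nonneg.2 hs) hM, mul_nonneg (sub_nonneg.2 hs) (sub_nonneg.2 hs)]
  calc (M + 1) * ((s + M) * (s + M) ^ 2) = (M + 1) * (s + M) * (s + M) ^ 2 := by ring
    _ ≤ (2 * s * (s + M) ^ 2 - (s + M) * (2 * γ * (s ^ 2 + M))) * (s + M) ^ 2 := by gcongr

lemma exp_le_two_of_le_half {α : ℝ} (hα : α ≤ 1 / 2) : Real.exp α ≤ 2 :=
  calc Real.exp α ≤ Real.exp (1 / 2) := Real.exp_le_exp.2 hα
    _ ≤ 1 / (1 - 1 / 2) := Real.exp_bound_div_one_sub_of_interval (by norm_num) (by norm_num)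
    _ = 2 := by norm_num

lemma sFun_exponent_nonneg {N : ℕ} (hN : 1 ≤ N) {α β : ℝ} (hβ : 0 ≤ β) :
    0 ≤ β * Real.exp α / (Real.exp α + 2 * (N : ℝ) - 2) := by
  have : (1 : ℝ) ≤ N := by exact_mod_cast hN
  have := Real.exp_pos α
  exact div_nonneg (by positivity) (by linarith)

lemma sFun_exponent_le {N : ℕ} (hN : 1 ≤ N) {α β : ℝ} (hα : α ≤ 1 / 2)
    (hβ : β ≤ 1 / 2) : β * Real.exp α / (Real.exp α + 2 * (N : ℝ) - 2) ≤ 1 / (2 * N) := by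
  have hN' : (1 : ℝ) ≤ N := by exact_mod_cast hN
  have hexp := Real.exp_pos α
  have hexp2 := exp_le_two_of_le_half hα
  rw [div_le_div_iff₀ (by linarith) (by positivity)]
  nlinarith [mul_nonneg (sub_nonneg.2 hβ) (mul_nonneg hexp.le (by linarith : (0 : ℝ) ≤ N)),
    mul_nonneg (sub_nonneg.2 hexp2) (by linarith : (0 : ℝ) ≤ N - 1)]

lemma one_le_sFun {N : ℕ} (hN : 1 ≤ N) (α : ℝ) {β : ℝ} (hβ : 0 ≤ β) : 1 ≤ sFun N α β :=
  Real.one_le_exp (sFun_exponent_nonneg hN hβ)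

lemma sFun_le {N : ℕ} (hN : 1 ≤ N) {α β : ℝ} (hα : α ≤ 1 / 2) (hβ₀ : 0 ≤ β) (hβ : β ≤ 1 / 2) :
    sFun N α β ≤ 1 + 1 / N := by
  have hN' : (1 : ℝ) ≤ N := by exact_mod_cast hN
  set x := β * Real.exp α / (Real.exp α + 2 * (N : ℝ) - 2)
  have hx₀ : 0 ≤ x := sFun_exponent_nonneg hN hβ₀
  have hx : x ≤ 1 / (2 * N) := sFun_exponent_le hN hα hβ
  have hx1 : x ≤ 1 := hx.trans (by rw [div_le_one (by positivity)]; linarith)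
  have habs := Real.abs_exp_sub_one_le (x := x) (by rwa [abs_of_nonneg hx₀])
  rw [abs_of_nonneg hx₀, abs_of_nonneg (by linarith [Real.one_le_exp hx₀])] at habs
  calc sFun N α β = Real.exp x := rfl
    _ ≤ 1 + 2 * (1 / (2 * N)) := by linarith
    _ = 1 + 1 / N := by field_simp

/-- For all sufficiently large `N`, in the regime `0 ≤ α, β, γ ≤ 1/2`,
`1/(2N) − C/N² ≤ −∂L_N/∂γ ≤ 1/N + C/N²`; in particular `−∂L_N/∂γ = Θ(1/N)`
uniformly over this regime. -/
theorem stmt13 :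
    ∃ C : ℝ, 0 < C ∧ ∃ N₀ : ℕ, ∀ N : ℕ, N₀ ≤ N → ∀ α β γ : ℝ,
      0 ≤ α → α ≤ 1 / 2 → 0 ≤ β → β ≤ 1 / 2 → 0 ≤ γ → γ ≤ 1 / 2 →
        1 / (2 * (N : ℝ)) - C / (N : ℝ) ^ 2 ≤ -dLgamma N α β γ ∧
          -dLgamma N α β γ ≤ 1 / (N : ℝ) + C / (N : ℝ) ^ 2 := by
  refine ⟨1, one_pos, 1, fun N hN α β γ _ hα hβ₀ hβ hγ₀ hγ => ?_⟩
  have hN' : (1 : ℝ) ≤ N := by exact_mod_cast hN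
  have hs₁ := one_le_sFun hN α hβ₀
  have hs₂ := sFun_le hN hα hβ₀ hβ
  have h1N : 1 / (N : ℝ) ≤ 1 := by rw [div_le_one (by positivity)]; exact hN'
  rw [neg_dLgamma_eq]
  constructor
  · calc 1 / (2 * (N : ℝ)) - 1 / (N : ℝ) ^ 2 ≤ 2 * N / (2 * N + 1) ^ 2 := by
          rw [div_sub_div _ _ (by positivity) (by positivity),
            div_le_div_iff₀ (by positivity) (by positivity)]
          nlinarith [pow_pos (by positivity : (0 : ℝ) < N) 3]
      _ ≤ (2 * N - 1 + 1) / (sFun N α β + (2 * N - 1)) ^ 2 := by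
          rw [sub_add_cancel]; gcongr 2 * N / ?_ ^ 2 <;> nlinarith
      _ ≤ _ := add_one_div_sq_le_lossSlope hs₁ (by linarith) hγ
  · calc _ ≤ 2 * sFun N α β / (sFun N α β + (2 * N - 1)) :=
          lossSlope_le (by linarith) hγ₀
      _ ≤ 2 * sFun N α β / (2 * N) := by gcongr; linarith
      _ ≤ 2 * (1 + 1 / N) / (2 * N) := by gcongr
      _ = 1 / (N : ℝ) + 1 / (N : ℝ) ^ 2 := by field_simp
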